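/- If a secondary structure P on a sequence of n bases contains an interleaving block, i.e., three stacking pairs (i,i+1;j-1,j), (i',i'+1;j'-1,j'), (i'',i''+1;j''-1,j'') with i < i' < i'' < j < j' < j'', then the graph G(P), whose vertex set is {1,...,n} with edges between consecutive indices and between every pair of bases paired in P, is not planar. -/
import Mathlib


inductive Base : Type
  | A | U | G | C
deriving DecidableEq, Repr

open Base

/-- Watson-Crick pairs. -/
def isWC : Base → Base → Prop := fun x y =>
  (x = A ∧ y = U) ∨ (x = U ∧ y = A) ∨ (x = C ∧ y = G) ∨ (x = G ∧ y = C)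

instance (x y : Base) : Decidable (isWC x y) := by unfold isWC; infer_instance

def at' (S : List Base) (i : ℕ) : Base := S.getD i Base.A

/-- A secondary structure: Watson-Crick pairs `(i,j)` with `i+2 ≤ j`, indices inside the
sequence, and no two pairs sharing a base. -/
def ValidSS (S : List Base) (P : Finset (ℕ × ℕ)) : Prop :=
  (∀ p ∈ P, p.1 + 2 ≤ p.2 ∧ p.2 < S.length ∧ isWC (at' S p.1) (at' S p.2)) ∧
  (∀ p ∈ P, ∀ q ∈ P, p ≠ q → p.1 ≠ q.1 ∧ p.1 ≠ q.2 ∧ p.2 ≠ q.1 ∧ p.2 ≠ q.2)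

/-- The graph `G(P)`: backbone edges between consecutive bases together with base-pair edges. -/
def rnaGraph (S : List Base) (P : Finset (ℕ × ℕ)) : SimpleGraph ℕ :=
  SimpleGraph.fromRel (fun a b => (b = a + 1 ∧ b < S.length) ∨ (a, b) ∈ P)

def IsMinor {W V : Type} (H : SimpleGraph W) (G : SimpleGraph V) : Prop :=
  ∃ φ : V → Option W,
    (∀ w : W, ∃ v, φ v = some w) ∧
    (∀ w : W, (G.induce {v | φ v = some w}).Connected) ∧
    (∀ w₁ w₂ : W, H.Adj w₁ w₂ → ∃ v₁ v₂, φ v₁ = some w₁ ∧ φ v₂ = some w₂ ∧ G.Adj v₁ v₂)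

/-- By Wagner's theorem, a graph is non-planar iff it has a `K₃,₃` or `K₅` minor. -/
def NonPlanar {V : Type} (G : SimpleGraph V) : Prop :=
  IsMinor (completeBipartiteGraph (Fin 3) (Fin 3)) G ∨ IsMinor (⊤ : SimpleGraph (Fin 5)) G

def Planar {V : Type} (G : SimpleGraph V) : Prop := ¬ NonPlanar G

-- backbone adjacency
lemma adj_bb (S : List Base) (P : Finset (ℕ × ℕ)) (a : ℕ) (h : a + 1 < S.length) :
    (rnaGraph S P).Adj a (a+1) := by
  exact ⟨by omega, Or.inl (Or.inl ⟨rfl, h⟩)⟩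

lemma adj_pair (S : List Base) (P : Finset (ℕ × ℕ)) {a b : ℕ} (h : (a, b) ∈ P) (hne : a ≠ b) :
    (rnaGraph S P).Adj a b := by
  exact ⟨hne, Or.inl (Or.inr h)⟩

lemma icc_connected (S : List Base) (P : Finset (ℕ × ℕ)) (a b : ℕ)
    (hab : a ≤ b) (hb : b < S.length) :
    ((rnaGraph S P).induce {v | a ≤ v ∧ v ≤ b}).Connected := by
  have key : ∀ k (x y : {v | a ≤ v ∧ v ≤ b}), (y : ℕ) = (x : ℕ) + k →
      ((rnaGraph S P).induce {v | a ≤ v ∧ v ≤ b}).Reachable x y := by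
    intro k
    induction k with
    | zero =>
      intro x y h
      have : x = y := Subtype.ext (by omega)
      rw [this]
    | succ k ih =>
      intro x y h
      have hx := x.2
      have hy := y.2
      simp only [Set.mem_setOf_eq] at hx hy
      have hz : (x : ℕ) + k ∈ {v | a ≤ v ∧ v ≤ b} := by
        simp only [Set.mem_setOf_eq]; omega
      refine (ih x ⟨(x : ℕ) + k, hz⟩ rfl).trans ?_
      refine SimpleGraph.Adj.reachable ?_
      show (rnaGraph S P).Adj ((x : ℕ) + k) (y : ℕ)
      rw [h]
      exact adj_bb S P _ (by omega)
  rw [SimpleGraph.connected_iff]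
  constructor
  · rintro x y
    rcases le_total (x : ℕ) (y : ℕ) with hle | hle
    · exact key ((y : ℕ) - (x : ℕ)) x y (by omega)
    · exact (key ((x : ℕ) - (y : ℕ)) y x (by omega)).symm
  · exact ⟨⟨a, by simp [hab]⟩⟩

def phi (i i' i'' j j' j'' : ℕ) : ℕ → Option (Fin 3 ⊕ Fin 3) := fun v =>
  if i ≤ v ∧ v ≤ i' then some (Sum.inl 0)
  else if i' + 1 ≤ v ∧ v + 1 ≤ i'' then some (Sum.inr 0)
  else if i'' ≤ v ∧ v + 1 ≤ j then some (Sum.inl 1)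
  else if v = j then some (Sum.inr 1)
  else if j + 1 ≤ v ∧ v + 1 ≤ j' then some (Sum.inl 2)
  else if j' ≤ v ∧ v + 1 ≤ j'' then some (Sum.inr 2)
  else none

set_option maxHeartbeats 4000000 in
/-- If a secondary structure contains an interleaving block (three pairwise interleaving
stacking pairs), then its graph `G(P)` is not planar. -/
theorem interleaving_block_not_planar
    (S : List Base) (P : Finset (ℕ × ℕ)) (hval : ValidSS S P)
    (i i' i'' j j' j'' : ℕ)
    (h1 : (i, j) ∈ P ∧ (i + 1, j - 1) ∈ P ∧ i + 4 ≤ j)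
    (h2 : (i', j') ∈ P ∧ (i' + 1, j' - 1) ∈ P ∧ i' + 4 ≤ j')
    (h3 : (i'', j'') ∈ P ∧ (i'' + 1, j'' - 1) ∈ P ∧ i'' + 4 ≤ j'')
    (hord : i < i' ∧ i' < i'' ∧ i'' < j ∧ j < j' ∧ j' < j'') :
    ¬ Planar (rnaGraph S P) := by
  obtain ⟨hp1, hq1, hj1⟩ := h1
  obtain ⟨hp2, hq2, hj2⟩ := h2
  obtain ⟨hp3, hq3, hj3⟩ := h3
  obtain ⟨o1, o2, o3, o4, o5⟩ := hord
  have hlen : j'' < S.length := ((hval.1 _ hp3).2.1)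
  have d1 : i' + 1 ≠ i'' :=
    (hval.2 _ hq2 _ hp3 (by intro h; rw [Prod.mk.injEq] at h; omega)).1
  have d2 : i'' + 1 ≠ j :=
    (hval.2 _ hq3 _ hp1 (by intro h; rw [Prod.mk.injEq] at h; omega)).2.1
  have d3 : j ≠ j' - 1 :=
    (hval.2 _ hp1 _ hq2 (by intro h; rw [Prod.mk.injEq] at h; omega)).2.2.2
  have oa : i' + 2 ≤ i'' := by omega
  have ob : i'' + 2 ≤ j := by omega
  have oc : j + 2 ≤ j' := by omega
  have Ei : phi i i' i'' j j' j'' (i) = some (Sum.inl 0) := by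
    unfold phi; split_ifs <;> first | rfl | (exfalso; omega)
  have Ei1 : phi i i' i'' j j' j'' (i') = some (Sum.inl 0) := by
    unfold phi; split_ifs <;> first | rfl | (exfalso; omega)
  have Ei2 : phi i i' i'' j j' j'' (i' + 1) = some (Sum.inr 0) := by
    unfold phi; split_ifs <;> first | rfl | (exfalso; omega)
  have Ei3 : phi i i' i'' j j' j'' (i'' - 1) = some (Sum.inr 0) := by
    unfold phi; split_ifs <;> first | rfl | (exfalso; omega)
  have Ei4 : phi i i' i'' j j' j'' (i'') = some (Sum.inl 1) := by
    unfold phi; split_ifs <;> first | rfl | (exfalso; omega)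
  have Ei5 : phi i i' i'' j j' j'' (i'' + 1) = some (Sum.inl 1) := by
    unfold phi; split_ifs <;> first | rfl | (exfalso; omega)
  have Ej1 : phi i i' i'' j j' j'' (j - 1) = some (Sum.inl 1) := by
    unfold phi; split_ifs <;> first | rfl | (exfalso; omega)
  have Ej : phi i i' i'' j j' j'' (j) = some (Sum.inr 1) := by
    unfold phi; split_ifs <;> first | rfl | (exfalso; omega)
  have Ej2 : phi i i' i'' j j' j'' (j + 1) = some (Sum.inl 2) := by
    unfold phi; split_ifs <;> first | rfl | (exfalso; omega)
  have Ej3 : phi i i' i'' j j' j'' (j' - 1) = some (Sum.inl 2) := by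
    unfold phi; split_ifs <;> first | rfl | (exfalso; omega)
  have Ej4 : phi i i' i'' j j' j'' (j') = some (Sum.inr 2) := by
    unfold phi; split_ifs <;> first | rfl | (exfalso; omega)
  have Ej5 : phi i i' i'' j j' j'' (j'' - 1) = some (Sum.inr 2) := by
    unfold phi; split_ifs <;> first | rfl | (exfalso; omega)
  intro hP
  apply hP
  left
  refine ⟨phi i i' i'' j j' j'', ?_, ?_, ?_⟩
  · rintro (w | w) <;> fin_cases w
    · exact ⟨i, Ei⟩
    · exact ⟨i'', Ei4⟩
    · exact ⟨j + 1, Ej2⟩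
    · exact ⟨i' + 1, Ei2⟩
    · exact ⟨j, Ej⟩
    · exact ⟨j', Ej4⟩
  · rintro (w | w) <;> fin_cases w
    · show ((rnaGraph S P).induce {v | phi i i' i'' j j' j'' v = some (Sum.inl 0)}).Connected
      have hs : {v | phi i i' i'' j j' j'' v = some (Sum.inl 0)} = {v | i ≤ v ∧ v ≤ i'} := by
        ext v; simp only [Set.mem_setOf_eq, phi]; split_ifs <;> simp only [Option.some.injEq, Sum.inl.injEq, Sum.inr.injEq, reduceCtorEq, Fin.reduceEq, iff_true, false_iff, iff_false, true_iff] <;> omega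
      rw [hs]; exact icc_connected S P i i' (by omega) (by omega)
    · show ((rnaGraph S P).induce {v | phi i i' i'' j j' j'' v = some (Sum.inl 1)}).Connected
      have hs : {v | phi i i' i'' j j' j'' v = some (Sum.inl 1)} = {v | i'' ≤ v ∧ v ≤ j - 1} := by
        ext v; simp only [Set.mem_setOf_eq, phi]; split_ifs <;> simp only [Option.some.injEq, Sum.inl.injEq, Sum.inr.injEq, reduceCtorEq, Fin.reduceEq, iff_true, false_iff, iff_false, true_iff] <;> omega
      rw [hs]; exact icc_connected S P i'' (j - 1) (by omega) (by omega)
    · show ((rnaGraph S P).induce {v | phi i i' i'' j j' j'' v = some (Sum.inl 2)}).Connected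
      have hs : {v | phi i i' i'' j j' j'' v = some (Sum.inl 2)} = {v | j + 1 ≤ v ∧ v ≤ j' - 1} := by
        ext v; simp only [Set.mem_setOf_eq, phi]; split_ifs <;> simp only [Option.some.injEq, Sum.inl.injEq, Sum.inr.injEq, reduceCtorEq, Fin.reduceEq, iff_true, false_iff, iff_false, true_iff] <;> omega
      rw [hs]; exact icc_connected S P (j + 1) (j' - 1) (by omega) (by omega)
    · show ((rnaGraph S P).induce {v | phi i i' i'' j j' j'' v = some (Sum.inr 0)}).Connected
      have hs : {v | phi i i' i'' j j' j'' v = some (Sum.inr 0)} = {v | i' + 1 ≤ v ∧ v ≤ i'' - 1} := by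
        ext v; simp only [Set.mem_setOf_eq, phi]; split_ifs <;> simp only [Option.some.injEq, Sum.inl.injEq, Sum.inr.injEq, reduceCtorEq, Fin.reduceEq, iff_true, false_iff, iff_false, true_iff] <;> omega
      rw [hs]; exact icc_connected S P (i' + 1) (i'' - 1) (by omega) (by omega)
    · show ((rnaGraph S P).induce {v | phi i i' i'' j j' j'' v = some (Sum.inr 1)}).Connected
      have hs : {v | phi i i' i'' j j' j'' v = some (Sum.inr 1)} = {v | j ≤ v ∧ v ≤ j} := by
        ext v; simp only [Set.mem_setOf_eq, phi]; split_ifs <;> simp only [Option.some.injEq, Sum.inl.injEq, Sum.inr.injEq, reduceCtorEq, Fin.reduceEq, iff_true, false_iff, iff_false, true_iff] <;> omega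
      rw [hs]; exact icc_connected S P j j (by omega) (by omega)
    · show ((rnaGraph S P).induce {v | phi i i' i'' j j' j'' v = some (Sum.inr 2)}).Connected
      have hs : {v | phi i i' i'' j j' j'' v = some (Sum.inr 2)} = {v | j' ≤ v ∧ v ≤ j'' - 1} := by
        ext v; simp only [Set.mem_setOf_eq, phi]; split_ifs <;> simp only [Option.some.injEq, Sum.inl.injEq, Sum.inr.injEq, reduceCtorEq, Fin.reduceEq, iff_true, false_iff, iff_false, true_iff] <;> omega
      rw [hs]; exact icc_connected S P j' (j'' - 1) (by omega) (by omega)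
  · have E : ∀ v w, phi i i' i'' j j' j'' v = w → phi i i' i'' j j' j'' v = w := fun _ _ h => h
    have a10 : (rnaGraph S P).Adj (i'' - 1) i'' := by
      have := adj_bb S P (i'' - 1) (by omega)
      rwa [Nat.sub_add_cancel (by omega)] at this
    have a11 : (rnaGraph S P).Adj (j - 1) j := by
      have := adj_bb S P (j - 1) (by omega)
      rwa [Nat.sub_add_cancel (by omega)] at this
    have a22 : (rnaGraph S P).Adj (j' - 1) j' := by
      have := adj_bb S P (j' - 1) (by omega)
      rwa [Nat.sub_add_cancel (by omega)] at this
    rintro (a | a) (b | b) hab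
    · simp at hab
    · fin_cases a <;> fin_cases b
      · exact ⟨i', i' + 1, Ei1, Ei2,
          adj_bb S P i' (by omega)⟩
      · exact ⟨i, j, Ei, Ej,
          adj_pair S P hp1 (by omega)⟩
      · exact ⟨i', j', Ei1, Ej4,
          adj_pair S P hp2 (by omega)⟩
      · exact ⟨i'', i'' - 1, Ei4, Ei3,
          a10.symm⟩
      · exact ⟨j - 1, j, Ej1, Ej,
          a11⟩
      · exact ⟨i'' + 1, j'' - 1, Ei5, Ej5,
          adj_pair S P hq3 (by omega)⟩
      · exact ⟨j' - 1, i' + 1, Ej3, Ei2,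
          (adj_pair S P hq2 (by omega)).symm⟩
      · exact ⟨j + 1, j, Ej2, Ej,
          (adj_bb S P j (by omega)).symm⟩
      · exact ⟨j' - 1, j', Ej3, Ej4,
          a22⟩
    · fin_cases a <;> fin_cases b
      · exact ⟨i' + 1, i', Ei2, Ei1,
          (adj_bb S P i' (by omega)).symm⟩
      · exact ⟨i'' - 1, i'', Ei3, Ei4,
          a10⟩
      · exact ⟨i' + 1, j' - 1, Ei2, Ej3,
          adj_pair S P hq2 (by omega)⟩
      · exact ⟨j, i, Ej, Ei,
          (adj_pair S P hp1 (by omega)).symm⟩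
      · exact ⟨j, j - 1, Ej, Ej1,
          a11.symm⟩
      · exact ⟨j, j + 1, Ej, Ej2,
          adj_bb S P j (by omega)⟩
      · exact ⟨j', i', Ej4, Ei1,
          (adj_pair S P hp2 (by omega)).symm⟩
      · exact ⟨j'' - 1, i'' + 1, Ej5, Ei5,
          (adj_pair S P hq3 (by omega)).symm⟩
      · exact ⟨j', j' - 1, Ej4, Ej3,
          a22.symm⟩
    · simp at hab
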